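/- The kernel g₃(P₁) of the prolonged symbol of the Rapcsák operator has dimension (8n³ − 9n² + 7n)/6; precisely, the subspace of symmetric trilinear forms A : V × V × V → ℝ satisfying A(X, Y, C) = 0 for all X, Y ∈ V and A(X, S, J Y) = A(X, Y, C) for all X, Y ∈ V has dimension (8n³ − 9n² + 7n)/6. -/

import Mathlib

set_option synthInstance.maxHeartbeats 1000000
set_option maxHeartbeats 1000000

noncomputable section

/-- The pointwise model `V = (Fin n → ℝ) × (Fin n → ℝ)` of the double tangent space
`T_x(TM)` for a spray on an `n`-dimensional manifold, in an adapted basis. -/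
abbrev V (n : ℕ) : Type := (Fin n → ℝ) × (Fin n → ℝ)

/-- The vertical endomorphism `J (x, y) = (0, x)`. -/
def Jmap (n : ℕ) : V n →ₗ[ℝ] V n where
  toFun p := (0, p.1)
  map_add' a b := by simp
  map_smul' c a := by simp

/-- The horizontal projector `P_h (x, y) = (x, 0)`. -/
def Ph (n : ℕ) : V n →ₗ[ℝ] V n where
  toFun p := (p.1, 0)
  map_add' a b := by simp
  map_smul' c a := by simp

/-- The `j`-th standard basis vector of `Fin n → ℝ`, indexed by `1 ≤ j ≤ n`
(zero if `j` is out of range). -/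
def dlt (n j : ℕ) : Fin n → ℝ := fun i => if (i : ℕ) + 1 = j then 1 else 0

/-- The horizontal basis vector `h_j`, `1 ≤ j ≤ n`. -/
def hvec (n j : ℕ) : V n := (dlt n j, 0)

/-- The vertical basis vector `v_j`, `1 ≤ j ≤ n`. -/
def vvec (n j : ℕ) : V n := (0, dlt n j)

/-- The spray vector `S = h_n`. -/
def Svec (n : ℕ) : V n := hvec n n

/-- The Liouville vector `C = v_n = J S`. -/
def Cvec (n : ℕ) : V n := vvec n n

/-- Bilinear forms on `V n`. -/
abbrev Bil (n : ℕ) := V n →ₗ[ℝ] V n →ₗ[ℝ] ℝ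

/-- Trilinear forms on `V n` (bundled). -/
abbrev Tri (n : ℕ) := V n →ₗ[ℝ] V n →ₗ[ℝ] V n →ₗ[ℝ] ℝ

/-- Trilinearity of a function `A : V × V × V → ℝ`. -/
def IsTrilin (n : ℕ) (A : V n → V n → V n → ℝ) : Prop :=
  (∀ X X' Y Z, A (X + X') Y Z = A X Y Z + A X' Y Z) ∧
  (∀ (c : ℝ) X Y Z, A (c • X) Y Z = c * A X Y Z) ∧
  (∀ X Y Y' Z, A X (Y + Y') Z = A X Y Z + A X Y' Z) ∧
  (∀ (c : ℝ) X Y Z, A X (c • Y) Z = c * A X Y Z) ∧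
  (∀ X Y Z Z', A X Y (Z + Z') = A X Y Z + A X Y Z') ∧
  (∀ (c : ℝ) X Y Z, A X Y (c • Z) = c * A X Y Z)

theorem IsTrilin.add {n : ℕ} {a b : V n → V n → V n → ℝ}
    (ha : IsTrilin n a) (hb : IsTrilin n b) : IsTrilin n (a + b) := by
  obtain ⟨ha1, ha2, ha3, ha4, ha5, ha6⟩ := ha
  obtain ⟨hb1, hb2, hb3, hb4, hb5, hb6⟩ := hb
  refine ⟨fun X X' Y Z => ?_, fun c X Y Z => ?_, fun X Y Y' Z => ?_,
    fun c X Y Z => ?_, fun X Y Z Z' => ?_, fun c X Y Z => ?_⟩ <;>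
      simp only [Pi.add_apply]
  · linear_combination ha1 X X' Y Z + hb1 X X' Y Z
  · linear_combination ha2 c X Y Z + hb2 c X Y Z
  · linear_combination ha3 X Y Y' Z + hb3 X Y Y' Z
  · linear_combination ha4 c X Y Z + hb4 c X Y Z
  · linear_combination ha5 X Y Z Z' + hb5 X Y Z Z'
  · linear_combination ha6 c X Y Z + hb6 c X Y Z

theorem IsTrilin.smul {n : ℕ} (c : ℝ) {a : V n → V n → V n → ℝ}
    (ha : IsTrilin n a) : IsTrilin n (c • a) := by
  obtain ⟨ha1, ha2, ha3, ha4, ha5, ha6⟩ := ha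
  refine ⟨fun X X' Y Z => ?_, fun d X Y Z => ?_, fun X Y Y' Z => ?_,
    fun d X Y Z => ?_, fun X Y Z Z' => ?_, fun d X Y Z => ?_⟩ <;>
      simp only [Pi.smul_apply, smul_eq_mul]
  · linear_combination c * ha1 X X' Y Z
  · linear_combination c * ha2 d X Y Z
  · linear_combination c * ha3 X Y Y' Z
  · linear_combination c * ha4 d X Y Z
  · linear_combination c * ha5 X Y Z Z'
  · linear_combination c * ha6 d X Y Z

theorem IsTrilin.zero (n : ℕ) : IsTrilin n (0 : V n → V n → V n → ℝ) := by
  refine ⟨fun X X' Y Z => by simp, fun c X Y Z => by simp, fun X Y Y' Z => by simp,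
    fun c X Y Z => by simp, fun X Y Z Z' => by simp, fun c X Y Z => by simp⟩

/-- The kernel `g₃(P₁)` of the prolonged symbol of the Rapcsák operator: symmetric
trilinear forms `A` on `V` with `A(X, Y, C) = 0` and `A(X, S, J Y) = A(X, Y, C)`. -/
def g3P1 (n : ℕ) : Submodule ℝ (V n → V n → V n → ℝ) where
  carrier := {A | IsTrilin n A ∧
    (∀ X Y Z, A X Y Z = A Y X Z) ∧ (∀ X Y Z, A X Y Z = A X Z Y) ∧
    (∀ X Y, A X Y (Cvec n) = 0) ∧
    (∀ X Y, A X (Svec n) (Jmap n Y) = A X Y (Cvec n))}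
  add_mem' := by
    rintro a b ⟨haT, ha1, ha2, ha3, ha4⟩ ⟨hbT, hb1, hb2, hb3, hb4⟩
    refine ⟨haT.add hbT, fun X Y Z => ?_, fun X Y Z => ?_, fun X Y => ?_,
      fun X Y => ?_⟩ <;> simp only [Pi.add_apply]
    · linear_combination ha1 X Y Z + hb1 X Y Z
    · linear_combination ha2 X Y Z + hb2 X Y Z
    · linear_combination ha3 X Y + hb3 X Y
    · linear_combination ha4 X Y + hb4 X Y
  zero_mem' := ⟨IsTrilin.zero n, fun X Y Z => by simp, fun X Y Z => by simp,
    fun X Y => by simp, fun X Y => by simp⟩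
  smul_mem' := by
    rintro c a ⟨haT, ha1, ha2, ha3, ha4⟩
    refine ⟨haT.smul c, fun X Y Z => ?_, fun X Y Z => ?_, fun X Y => ?_,
      fun X Y => ?_⟩ <;> simp only [Pi.smul_apply, smul_eq_mul]
    · linear_combination c * ha1 X Y Z
    · linear_combination c * ha2 X Y Z
    · linear_combination c * ha3 X Y
    · linear_combination c * ha4 X Y

/-!
In the adapted basis `h₁, …, hₙ, v₁, …, vₙ` a symmetric trilinear form is the same thing as
a function on unordered triples of basis indices. The two conditions say precisely that this
function vanishes on the triples containing `C = vₙ`, and on those containing both `S = hₙ`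
and some `vₖ` (since `A(X, S, vₖ) = A(X, S, J hₖ) = A(X, hₖ, C) = 0`). The surviving triples
are the `(n+2 choose 3)` purely horizontal ones together with the `(2n choose 3)` avoiding `S`
and `C`, of which `(n+1 choose 3)` were already counted; this sum is `(8n³ − 9n² + 7n)/6`.
-/

open Finset Module

theorem Finset.card_sym {α : Type*} [DecidableEq α] (s : Finset α) (k : ℕ) :
    (s.sym k).card = (s.card + k - 1).choose k := by
  nth_rw 1 [← s.attach_map_val]
  rw [← univ_eq_attach, sym_map, card_map, sym_univ, card_univ,
    Sym.card_sym_eq_choose, Fintype.card_coe]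

section Sym3

variable {ι : Type*}

def sym3 (i j k : ι) : Sym ι 3 := i ::ₛ j ::ₛ k ::ₛ Sym.nil

@[simp] lemma mem_sym3 {a i j k : ι} : a ∈ sym3 i j k ↔ a = i ∨ a = j ∨ a = k := by
  simp [sym3, Sym.mem_cons, Sym.notMem_nil]

lemma sym3_swap12 (i j k : ι) : sym3 i j k = sym3 j i k := Sym.cons_swap ..

lemma sym3_swap23 (i j k : ι) : sym3 i j k = sym3 i k j := congrArg (i ::ₛ ·) (Sym.cons_swap ..)

lemma sym3_surjective : Function.Surjective fun t : ι × ι × ι => sym3 t.1 t.2.1 t.2.2 := by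
  intro m
  obtain ⟨i, m, rfl⟩ := m.exists_eq_cons_of_succ
  obtain ⟨j, m, rfl⟩ := m.exists_eq_cons_of_succ
  obtain ⟨k, m, rfl⟩ := m.exists_eq_cons_of_succ
  exact ⟨(i, j, k), by rw [Sym.eq_nil_of_card_zero m]; rfl⟩

lemma exists_eq_sym3_of_mem {m : Sym ι 3} {a : ι} (ha : a ∈ m) : ∃ i j, m = sym3 i j a := by
  obtain ⟨⟨i, j, k⟩, rfl⟩ := sym3_surjective m
  rcases mem_sym3.1 ha with rfl | rfl | rfl
  · exact ⟨j, k, (sym3_swap12 ..).trans (sym3_swap23 ..)⟩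
  · exact ⟨i, k, sym3_swap23 ..⟩
  · exact ⟨i, j, rfl⟩

lemma exists_eq_sym3_of_mem_of_mem {m : Sym ι 3} {a b : ι} (hab : a ≠ b) (ha : a ∈ m)
    (hb : b ∈ m) : ∃ i, m = sym3 i a b := by
  obtain ⟨i, j, rfl⟩ := exists_eq_sym3_of_mem hb
  rcases mem_sym3.1 ha with rfl | rfl | rfl
  · exact ⟨j, sym3_swap12 ..⟩
  · exact ⟨i, rfl⟩
  · exact absurd rfl hab

variable {β : Type*} {w : ι → ι → ι → β}

lemma apply_eq_of_sym3_eq (h12 : ∀ i j k, w i j k = w j i k) (h23 : ∀ i j k, w i j k = w i k j)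
    {i j k a b c : ι} (h : sym3 i j k = sym3 a b c) : w i j k = w a b c := by
  have key {j k b c : ι} (h : sym3 i j k = sym3 i b c) : w i j k = w i b c := by
    have h' : j ::ₛ k ::ₛ Sym.nil = b ::ₛ c ::ₛ Sym.nil := (Sym.cons_inj_right ..).1 h
    have hj : j ∈ b ::ₛ c ::ₛ Sym.nil := h' ▸ Sym.mem_cons_self ..
    rcases by simpa [Sym.mem_cons, Sym.notMem_nil] using hj with rfl | rfl
    · rw [(Sym.cons_inj_left ..).1 ((Sym.cons_inj_right ..).1 h')]
    · rw [Sym.cons_swap, Sym.cons_inj_left] at h'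
      rw [h', h23]
  have hi : i ∈ sym3 a b c := h ▸ by simp
  rcases mem_sym3.1 hi with rfl | rfl | rfl
  · exact key h
  · rw [h12 a]; exact key (h.trans (sym3_swap12 ..))
  · rw [h23 a, h12 a]; exact key (h.trans ((sym3_swap23 ..).trans (sym3_swap12 ..)))

-- Evaluates `w` at some ordering of `m`; only meaningful for symmetric `w`.
def liftSym3 (w : ι → ι → ι → β) (m : Sym ι 3) : β :=
  let t := Function.surjInv sym3_surjective m
  w t.1 t.2.1 t.2.2

lemma liftSym3_sym3 (h12 : ∀ i j k, w i j k = w j i k) (h23 : ∀ i j k, w i j k = w i k j)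
    (i j k : ι) : liftSym3 w (sym3 i j k) = w i j k :=
  apply_eq_of_sym3_eq h12 h23 (Function.surjInv_eq sym3_surjective (sym3 i j k))

end Sym3

section SymTensors

variable (K : Type*) [Field K] {ι : Type*} [DecidableEq ι]

def symTensors (s : Finset (Sym ι 3)) : Submodule K (ι → ι → ι → K) where
  carrier := {w | (∀ i j k, w i j k = w j i k) ∧ (∀ i j k, w i j k = w i k j) ∧
    ∀ i j k, sym3 i j k ∉ s → w i j k = 0}
  add_mem' := by
    rintro a b ⟨ha12, ha23, ha⟩ ⟨hb12, hb23, hb⟩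
    refine ⟨fun i j k => ?_, fun i j k => ?_, fun i j k h => ?_⟩ <;> simp only [Pi.add_apply]
    · rw [ha12, hb12]
    · rw [ha23, hb23]
    · rw [ha i j k h, hb i j k h, add_zero]
  zero_mem' := ⟨fun _ _ _ => rfl, fun _ _ _ => rfl, fun _ _ _ _ => rfl⟩
  smul_mem' := by
    rintro c a ⟨ha12, ha23, ha⟩
    refine ⟨fun i j k => ?_, fun i j k => ?_, fun i j k h => ?_⟩ <;> simp only [Pi.smul_apply]
    · rw [ha12]
    · rw [ha23]
    · rw [ha i j k h, smul_zero]

variable {K}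

def symTensorsEquiv (s : Finset (Sym ι 3)) : symTensors K s ≃ₗ[K] (s → K) where
  toFun w m := liftSym3 w.1 m.1
  map_add' _ _ := rfl
  map_smul' _ _ := rfl
  invFun f := ⟨fun i j k => if h : sym3 i j k ∈ s then f ⟨_, h⟩ else 0, by
    refine ⟨fun i j k => ?_, fun i j k => ?_, fun i j k h => dif_neg h⟩
    · simp only [sym3_swap12 i j k]
    · simp only [sym3_swap23 i j k]⟩
  left_inv w := by
    obtain ⟨h12, h23, hs⟩ := w.2
    ext i j k
    dsimp only
    split_ifs with h
    · exact liftSym3_sym3 h12 h23 i j k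
    · exact (hs i j k h).symm
  right_inv f := by
    ext ⟨m, hm⟩
    obtain ⟨⟨i, j, k⟩, rfl⟩ := sym3_surjective m
    refine (liftSym3_sym3 (fun a b c => ?_) (fun a b c => ?_) i j k).trans (dif_pos hm)
    · simp only [sym3_swap12 a b c]
    · simp only [sym3_swap23 a b c]

theorem finrank_symTensors (s : Finset (Sym ι 3)) : finrank K (symTensors K s) = s.card := by
  rw [(symTensorsEquiv s).finrank_eq, finrank_fintype_fun_eq_card, Fintype.card_coe]

end SymTensors

section TrilinearOfCoeffs

variable {K : Type*} [Field K] {ι : Type*} {M : Type*} [AddCommGroup M] [Module K M]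
  (b : Basis ι K M)

theorem trilinear_ext_basis {T T' : M →ₗ[K] M →ₗ[K] M →ₗ[K] K}
    (h : ∀ i j k, T (b i) (b j) (b k) = T' (b i) (b j) (b k)) : T = T' :=
  LinearMap.ext_basis b b fun i j => b.ext fun k => h i j k

def trilinearOfCoeffs (w : ι → ι → ι → K) : M →ₗ[K] M →ₗ[K] M →ₗ[K] K :=
  b.constr K fun i => b.constr K fun j => b.constr K fun k => w i j k

@[simp] lemma trilinearOfCoeffs_basis (w : ι → ι → ι → K) (i j k : ι) :
    trilinearOfCoeffs b w (b i) (b j) (b k) = w i j k := by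
  simp [trilinearOfCoeffs, Basis.constr_basis]

lemma trilinearOfCoeffs_comm12 {w : ι → ι → ι → K} (h12 : ∀ i j k, w i j k = w j i k)
    (X Y Z : M) : trilinearOfCoeffs b w X Y Z = trilinearOfCoeffs b w Y X Z := by
  have : trilinearOfCoeffs b w = (trilinearOfCoeffs b w).flip :=
    trilinear_ext_basis b fun i j k => by simp [h12 i j k]
  conv_lhs => rw [this]
  rfl

lemma trilinearOfCoeffs_comm23 {w : ι → ι → ι → K} (h23 : ∀ i j k, w i j k = w i k j)
    (X Y Z : M) : trilinearOfCoeffs b w X Y Z = trilinearOfCoeffs b w X Z Y := by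
  have : trilinearOfCoeffs b w = LinearMap.lflip.toLinearMap ∘ₗ trilinearOfCoeffs b w :=
    trilinear_ext_basis b fun i j k => by simp [h23 i j k]
  conv_lhs => rw [this]
  rfl

end TrilinearOfCoeffs

section IsTrilin

variable {n : ℕ}

def IsTrilin.toTri {A : V n → V n → V n → ℝ} (hA : IsTrilin n A) : Tri n where
  toFun X :=
    { toFun Y :=
        { toFun Z := A X Y Z
          map_add' := hA.2.2.2.2.1 X Y
          map_smul' c Z := hA.2.2.2.2.2 c X Y Z }
      map_add' Y Y' := LinearMap.ext fun Z => hA.2.2.1 X Y Y' Z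
      map_smul' c Y := LinearMap.ext fun Z => hA.2.2.2.1 c X Y Z }
  map_add' X X' := LinearMap.ext fun Y => LinearMap.ext fun Z => hA.1 X X' Y Z
  map_smul' c X := LinearMap.ext fun Y => LinearMap.ext fun Z => hA.2.1 c X Y Z

@[simp] lemma IsTrilin.toTri_apply {A : V n → V n → V n → ℝ} (hA : IsTrilin n A)
    (X Y Z : V n) :
    hA.toTri X Y Z = A X Y Z := rfl

lemma isTrilin_coe (T : Tri n) : IsTrilin n fun X Y Z => T X Y Z := by
  refine ⟨?_, ?_, ?_, ?_, ?_, ?_⟩ <;> intros <;> simp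

end IsTrilin

section Adapted

variable (m : ℕ)

-- `.inl i` indexes `h_{i+1}` and `.inr i` indexes `v_{i+1}`; `S` and `C` carry `Fin.last m`.
abbrev AdaptedIdx := Fin (m + 1) ⊕ Fin (m + 1)

def adaptedBasis : Basis (AdaptedIdx m) ℝ (V (m + 1)) :=
  (Pi.basisFun ℝ (Fin (m + 1))).prod (Pi.basisFun ℝ (Fin (m + 1)))

variable {m}

lemma adaptedBasis_inl (i : Fin (m + 1)) : adaptedBasis m (.inl i) = (Pi.single i 1, 0) := by
  simp [adaptedBasis, Basis.prod_apply]

lemma adaptedBasis_inr (i : Fin (m + 1)) : adaptedBasis m (.inr i) = (0, Pi.single i 1) := by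
  simp [adaptedBasis, Basis.prod_apply]

lemma dlt_eq_single_last : dlt (m + 1) (m + 1) = Pi.single (Fin.last m) 1 := by
  ext i
  simp [dlt, Pi.single_apply, Fin.ext_iff]

lemma Svec_eq : Svec (m + 1) = adaptedBasis m (.inl (Fin.last m)) := by
  rw [adaptedBasis_inl, Svec, hvec, dlt_eq_single_last]

lemma Cvec_eq : Cvec (m + 1) = adaptedBasis m (.inr (Fin.last m)) := by
  rw [adaptedBasis_inr, Cvec, vvec, dlt_eq_single_last]

lemma Jmap_adaptedBasis_inl (i : Fin (m + 1)) :
    Jmap (m + 1) (adaptedBasis m (.inl i)) = adaptedBasis m (.inr i) := by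
  rw [adaptedBasis_inl, adaptedBasis_inr]; rfl

lemma Jmap_adaptedBasis_inr (i : Fin (m + 1)) : Jmap (m + 1) (adaptedBasis m (.inr i)) = 0 := by
  rw [adaptedBasis_inr]; rfl

end Adapted

section Count

lemma six_mul_choose_three (k : ℕ) : 6 * (k + 2).choose 3 = (k + 2) * (k + 1) * k := by
  have h := Nat.descFactorial_eq_factorial_mul_choose (k + 2) 3
  rwa [show (k + 2).descFactorial 3 = (k + 2) * (k + 1) * k by simp [Nat.descFactorial]; ring,
    eq_comm] at h

variable (m : ℕ)

-- The purely horizontal triples and those avoiding `S` and `C`: the triples on which the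
-- conditions defining `g3P1` impose nothing.
def allowedTriples : Finset (Sym (AdaptedIdx m) 3) :=
  (univ.map .inl).sym 3 ∪ ({.inl (Fin.last m), .inr (Fin.last m)}ᶜ : Finset _).sym 3

lemma card_allowedTriples :
    (allowedTriples m).card = (m + 3).choose 3 + ((2 * m + 2).choose 3 - (m + 2).choose 3) := by
  rw [allowedTriples]
  set L : Finset (AdaptedIdx m) := univ.map .inl
  set N : Finset (AdaptedIdx m) := {.inl (Fin.last m), .inr (Fin.last m)}ᶜ
  have hL : L.card = m + 1 := by simp [L]
  have hN : N.card = 2 * m := by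
    rw [card_compl, card_pair Sum.inl_ne_inr, Fintype.card_sum, Fintype.card_fin]
    omega
  have hLN : L ∩ N = L.erase (.inl (Fin.last m)) := by
    ext (a | a) <;> simp [L, N]
  have hLN' : (L ∩ N).card = m := by
    rw [hLN, card_erase_of_mem (by simp [L]), hL]; rfl
  have := card_union_add_card_inter (L.sym 3) (N.sym 3)
  rw [← sym_inter, card_sym, card_sym, card_sym, hL, hN, hLN'] at this
  have hle : (m + 2).choose 3 ≤ (2 * m + 2).choose 3 := Nat.choose_le_choose _ (by omega)
  rw [show m + 1 + 3 - 1 = m + 3 by omega, show 2 * m + 3 - 1 = 2 * m + 2 by omega,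
    show m + 3 - 1 = m + 2 by omega] at this
  omega

lemma choose_three_formula :
    (m + 3).choose 3 + ((2 * m + 2).choose 3 - (m + 2).choose 3) =
      (8 * (m + 1) ^ 3 - 9 * (m + 1) ^ 2 + 7 * (m + 1)) / 6 := by
  rcases m with _ | l
  -- at `m = 0` the subtraction `8 - 9` truncates to `0`, and still `7 / 6 = 1`
  · rfl
  have e1 : 6 * (l + 1 + 3).choose 3 = (l + 4) * (l + 3) * (l + 2) := six_mul_choose_three (l + 2)
  have e2 : 6 * (2 * (l + 1) + 2).choose 3 = (2 * l + 4) * (2 * l + 3) * (2 * l + 2) :=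
    six_mul_choose_three (2 * l + 2)
  have e3 : 6 * (l + 1 + 2).choose 3 = (l + 3) * (l + 2) * (l + 1) := six_mul_choose_three (l + 1)
  have hle : (l + 1 + 2).choose 3 ≤ (2 * (l + 1) + 2).choose 3 := Nat.choose_le_choose _ (by omega)
  have h9 : 9 * (l + 1 + 1) ^ 2 ≤ 8 * (l + 1 + 1) ^ 3 := by nlinarith
  refine (Nat.div_eq_of_eq_mul_left (by norm_num) ?_).symm
  zify [hle, h9]
  zify at e1 e2 e3
  linear_combination -e1 - e2 + e3

end Count

section Kernel

variable {m : ℕ}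

lemma coeffs_mem_symTensors {A : V (m + 1) → V (m + 1) → V (m + 1) → ℝ}
    (hA : A ∈ g3P1 (m + 1)) :
    (fun i j k => A (adaptedBasis m i) (adaptedBasis m j) (adaptedBasis m k)) ∈
      symTensors ℝ (allowedTriples m) := by
  obtain ⟨-, h12, h23, hC, hS⟩ := hA
  set w := fun i j k => A (adaptedBasis m i) (adaptedBasis m j) (adaptedBasis m k)
  have hw12 : ∀ i j k, w i j k = w j i k := fun _ _ _ => h12 ..
  have hw23 : ∀ i j k, w i j k = w i k j := fun _ _ _ => h23 ..
  refine ⟨hw12, hw23, fun i j k hijk => ?_⟩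
  simp only [allowedTriples, mem_union, mem_sym_iff, not_or, not_forall] at hijk
  obtain ⟨⟨a, ha, haL⟩, b, hb, hbN⟩ := hijk
  simp only [mem_map, mem_univ, true_and, not_exists, mem_compl, mem_insert,
    mem_singleton, not_not] at haL hbN
  rcases hbN with rfl | rfl
  · obtain ⟨p, rfl⟩ : ∃ p, a = .inr p := by
      cases a with
      | inl x => exact absurd rfl (haL x)
      | inr p => exact ⟨p, rfl⟩
    obtain ⟨x, hx⟩ := exists_eq_sym3_of_mem_of_mem Sum.inl_ne_inr hb ha
    calc w i j k
        = A (adaptedBasis m x) (Svec (m + 1)) (Jmap (m + 1) (adaptedBasis m (.inl p))) := by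
          rw [apply_eq_of_sym3_eq hw12 hw23 hx, Svec_eq, Jmap_adaptedBasis_inl]
      _ = 0 := (hS _ _).trans (hC _ _)
  · obtain ⟨x, y, hxy⟩ := exists_eq_sym3_of_mem hb
    calc w i j k = A (adaptedBasis m x) (adaptedBasis m y) (Cvec (m + 1)) := by
          rw [apply_eq_of_sym3_eq hw12 hw23 hxy, Cvec_eq]
      _ = 0 := hC _ _

lemma trilinearOfCoeffs_mem_g3P1 {w : AdaptedIdx m → AdaptedIdx m → AdaptedIdx m → ℝ}
    (hw : w ∈ symTensors ℝ (allowedTriples m)) :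
    (fun X Y Z => trilinearOfCoeffs (adaptedBasis m) w X Y Z) ∈ g3P1 (m + 1) := by
  obtain ⟨h12, h23, hs⟩ := hw
  set T := trilinearOfCoeffs (adaptedBasis m) w
  have hC : ∀ X Y, T X Y (Cvec (m + 1)) = 0 := by
    have : T.compr₂ (LinearMap.applyₗ (Cvec (m + 1))) = 0 :=
      LinearMap.ext_basis (adaptedBasis m) (adaptedBasis m) fun i j => by
        simp only [LinearMap.compr₂_apply, LinearMap.applyₗ_apply_apply, Cvec_eq, T,
          trilinearOfCoeffs_basis, LinearMap.zero_apply]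
        exact hs _ _ _ (by simp [allowedTriples, -sym_succ])
    exact fun X Y => LinearMap.congr_fun₂ this X Y
  have hS : ∀ X Y, T X (Svec (m + 1)) (Jmap (m + 1) Y) = 0 := by
    have : (T.flip (Svec (m + 1))).compl₂ (Jmap (m + 1)) = 0 :=
      LinearMap.ext_basis (adaptedBasis m) (adaptedBasis m) fun i j => by
        simp only [LinearMap.compl₂_apply, LinearMap.flip_apply, LinearMap.zero_apply]
        cases j with
        | inl p =>
          rw [Jmap_adaptedBasis_inl, Svec_eq, trilinearOfCoeffs_basis]
          exact hs _ _ _ (by simp [allowedTriples, -sym_succ])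
        | inr p => rw [Jmap_adaptedBasis_inr, map_zero]
    exact fun X Y => LinearMap.congr_fun₂ this X Y
  exact ⟨isTrilin_coe T, trilinearOfCoeffs_comm12 _ h12, trilinearOfCoeffs_comm23 _ h23, hC,
    fun X Y => (hS X Y).trans (hC X Y).symm⟩

variable (m) in
def g3P1EquivSymTensors : g3P1 (m + 1) ≃ₗ[ℝ] symTensors ℝ (allowedTriples m) where
  toFun A := ⟨_, coeffs_mem_symTensors A.2⟩
  map_add' _ _ := rfl
  map_smul' _ _ := rfl
  invFun w := ⟨_, trilinearOfCoeffs_mem_g3P1 w.2⟩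
  left_inv A := by
    have : trilinearOfCoeffs (adaptedBasis m)
        (fun i j k => A.1 (adaptedBasis m i) (adaptedBasis m j) (adaptedBasis m k)) =
          A.2.1.toTri :=
      trilinear_ext_basis (adaptedBasis m) fun i j k => by simp
    exact Subtype.ext <| funext₃ fun X Y Z =>
      LinearMap.congr_fun (LinearMap.congr_fun₂ this X Y) Z
  right_inv w := Subtype.ext <| funext₃ <| trilinearOfCoeffs_basis (adaptedBasis m) w.1

end Kernel

/-- the kernel `g₃(P₁)` of the prolonged symbol of the Rapcsák operator
has dimension `(8n³ − 9n² + 7n)/6`. -/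
theorem dim_g3P1 (n : ℕ) (hn : 1 ≤ n) :
    Module.finrank ℝ (g3P1 n) = (8 * n ^ 3 - 9 * n ^ 2 + 7 * n) / 6 := by
  obtain ⟨m, rfl⟩ : ∃ m, n = m + 1 := ⟨n - 1, by omega⟩
  rw [(g3P1EquivSymTensors m).finrank_eq, finrank_symTensors, card_allowedTriples,
    choose_three_formula]
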